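/- arXiv:1810.07981 — 5 statements merged into one kernel-verified Lean document; each statement's English description precedes it below -/
import Mathlib

section
/- Let (X, 𝒜, μ) be a measure space and 0 < T ≤ ∞. Suppose v : (0,T) → L²(X,μ;ℝ) is differentiable (with respect to the L²-norm) at every t ∈ (0,T) with derivative v'(t), that ⟨v'(t), (v(t))⁻⟩ ≥ 0 for every t ∈ (0,T), and that ‖(v(t))⁻‖₂ → 0 as t → 0⁺. Then for every t ∈ (0,T) one has (v(t))⁻ = 0 in L², i.e. v(t) ≥ 0 μ-almost everywhere. -/
/-!
Let `φ s = ‖(v s)⁻‖²`. Since `-v z ≤ (v x)⁻ - (v z - v x)` and the norm is solid,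
`φ z ≤ ‖(v x)⁻ - (v z - v x)‖² = φ x - 2⟪v z - v x, (v x)⁻⟫ + ‖v z - v x‖²`,
so the upper right Dini derivative of `φ` at `x` is at most `-2⟪v' x, (v x)⁻⟫ ≤ 0`.
Hence `φ` is nonincreasing on `(0, T)`, and it tends to `0` at `0⁺`, so it vanishes.
-/

open MeasureTheory Filter Topology Set
open scoped ENNReal RealInnerProductSpace

section NormedLattice

variable {E : Type*} [NormedAddCommGroup E] [Lattice E] [HasSolidNorm E] [IsOrderedAddMonoid E]

theorem norm_negPart_le_norm_negPart_sub_sub (a b : E) : ‖a⁻‖ ≤ ‖b⁻ - (a - b)‖ := by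
  refine norm_le_norm_of_abs_le_abs ?_
  rw [abs_of_nonneg (negPart_nonneg a), negPart_def]
  refine sup_le (le_trans ?_ (le_abs_self _)) (abs_nonneg _)
  have : -b ≤ b⁻ := neg_le_negPart b
  calc -a = -b - (a - b) := by abel
    _ ≤ b⁻ - (a - b) := sub_le_sub_right this _

variable [InnerProductSpace ℝ E]

theorem sq_norm_negPart_le (a b : E) :
    ‖a⁻‖ ^ 2 ≤ ‖b⁻‖ ^ 2 - 2 * ⟪a - b, b⁻⟫ + ‖a - b‖ ^ 2 := by
  have h := pow_le_pow_left₀ (norm_nonneg _) (norm_negPart_le_norm_negPart_sub_sub a b) 2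
  rwa [norm_sub_sq_real, real_inner_comm] at h

theorem slope_sq_norm_negPart_le (v : ℝ → E) {x z : ℝ} (hxz : x < z) :
    slope (fun s => ‖(v s)⁻‖ ^ 2) x z
      ≤ -2 * ⟪slope v x z, (v x)⁻⟫ + (z - x) * ‖slope v x z‖ ^ 2 := by
  have hzx : 0 < z - x := sub_pos.mpr hxz
  have key := sq_norm_negPart_le (v z) (v x)
  rw [slope_def_field, slope_def_module, real_inner_smul_left, norm_smul, mul_pow,
    Real.norm_eq_abs, sq_abs, div_le_iff₀ hzx]
  calc ‖(v z)⁻‖ ^ 2 - ‖(v x)⁻‖ ^ 2 ≤ -2 * ⟪v z - v x, (v x)⁻⟫ + ‖v z - v x‖ ^ 2 := by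
        linarith
    _ = _ := by field_simp

theorem eventually_slope_sq_norm_negPart_lt {v : ℝ → E} {v' : E} {x r : ℝ}
    (hv : HasDerivWithinAt v v' (Ioi x) x) (hr : -2 * ⟪v', (v x)⁻⟫ < r) :
    ∀ᶠ z in 𝓝[>] x, slope (fun s => ‖(v s)⁻‖ ^ 2) x z < r := by
  have hslope : Tendsto (slope v x) (𝓝[>] x) (𝓝 v') :=
    (hasDerivWithinAt_iff_tendsto_slope' (lt_irrefl x)).mp hv
  have hsub : Tendsto (fun z : ℝ => z - x) (𝓝[>] x) (𝓝 0) :=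
    tendsto_sub_nhds_zero_iff.mpr nhdsWithin_le_nhds
  have hbound : Tendsto (fun z => -2 * ⟪slope v x z, (v x)⁻⟫ + (z - x) * ‖slope v x z‖ ^ 2)
      (𝓝[>] x) (𝓝 (-2 * ⟪v', (v x)⁻⟫ + 0 * ‖v'‖ ^ 2)) :=
    (tendsto_const_nhds.mul (hslope.inner tendsto_const_nhds)).add
      (hsub.mul (hslope.norm.pow 2))
  rw [zero_mul, add_zero] at hbound
  filter_upwards [self_mem_nhdsWithin, hbound.eventually_lt_const hr] with z hxz hz
  exact (slope_sq_norm_negPart_le v hxz).trans_lt hz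

theorem norm_negPart_le_of_inner_deriv_negPart_nonneg {v v' : ℝ → E} {a b : ℝ} (hab : a ≤ b)
    (hv : ∀ x ∈ Icc a b, HasDerivAt v (v' x) x) (hpos : ∀ x ∈ Icc a b, 0 ≤ ⟪v' x, (v x)⁻⟫) :
    ‖(v b)⁻‖ ≤ ‖(v a)⁻‖ := by
  have hcont : ContinuousOn (fun s => ‖(v s)⁻‖ ^ 2) (Icc a b) := fun x hx =>
    ((continuous_norm.comp continuous_negPart).pow 2).continuousAt.comp_continuousWithinAt
      (hv x hx).continuousAt.continuousWithinAt
  have hsq := image_le_of_liminf_slope_right_le_deriv_boundary hcont le_rfl continuousOn_const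
    (fun x _ => hasDerivWithinAt_const x _ _) (B' := fun _ => 0)
    (fun x hx r hr => (eventually_slope_sq_norm_negPart_lt
      (hv x (Ico_subset_Icc_self hx)).hasDerivWithinAt
      (by linarith [hpos x (Ico_subset_Icc_self hx)])).frequently)
    (right_mem_Icc.mpr hab)
  exact (pow_le_pow_iff_left₀ (norm_nonneg _) (norm_nonneg _) two_ne_zero).mp hsq

end NormedLattice

theorem stmt1_general
    {X : Type*} [MeasurableSpace X] (μ : Measure X)
    (T : ℝ≥0∞)
    (v v' : ℝ → Lp ℝ 2 μ)
    (hderiv : ∀ t : ℝ, 0 < t → ENNReal.ofReal t < T →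
      Tendsto (fun h : ℝ => h⁻¹ • (v (t + h) - v t)) (𝓝[≠] (0:ℝ)) (𝓝 (v' t)))
    (hpos : ∀ t : ℝ, 0 < t → ENNReal.ofReal t < T → 0 ≤ (inner ℝ (v' t) ((v t)⁻) : ℝ))
    (hzero : Tendsto (fun t : ℝ => ‖(v t)⁻‖) (𝓝[>] (0:ℝ)) (𝓝 0)) :
    ∀ t : ℝ, 0 < t → ENNReal.ofReal t < T → (v t)⁻ = 0 := by
  intro t ht htT
  have hmem : ∀ {a}, 0 < a → ∀ x ∈ Icc a t, 0 < x ∧ ENNReal.ofReal x < T := fun ha x hx =>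
    ⟨ha.trans_le hx.1, (ENNReal.ofReal_le_ofReal hx.2).trans_lt htT⟩
  have hdecr : ∀ᶠ a in 𝓝[>] (0:ℝ), ‖(v t)⁻‖ ≤ ‖(v a)⁻‖ := by
    filter_upwards [Ioo_mem_nhdsGT ht] with a ha
    exact norm_negPart_le_of_inner_deriv_negPart_nonneg ha.2.le
      (fun x hx => hasDerivAt_iff_tendsto_slope_zero.mpr
        (hderiv x (hmem ha.1 x hx).1 (hmem ha.1 x hx).2))
      (fun x hx => hpos x (hmem ha.1 x hx).1 (hmem ha.1 x hx).2)
  exact norm_le_zero_iff.mp (ge_of_tendsto hzero hdecr)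

/-- analytic core of the parabolic maximum principle.
If `v : (0,T) → L²(X,μ;ℝ)` is differentiable at every `t ∈ (0,T)` with derivative `v' t`,
`⟨v' t, (v t)⁻⟩ ≥ 0` on `(0,T)`, and `‖(v t)⁻‖ → 0` as `t → 0⁺`, then `(v t)⁻ = 0`,
i.e. `v t ≥ 0` μ-a.e., for every `t ∈ (0,T)`. -/
theorem stmt1
    {X : Type*} [MeasurableSpace X] (μ : Measure X)
    (T : ℝ≥0∞) (hT : 0 < T)
    (v v' : ℝ → Lp ℝ 2 μ)
    (hderiv : ∀ t : ℝ, 0 < t → ENNReal.ofReal t < T →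
      Tendsto (fun h : ℝ => h⁻¹ • (v (t + h) - v t)) (𝓝[≠] (0:ℝ)) (𝓝 (v' t)))
    (hpos : ∀ t : ℝ, 0 < t → ENNReal.ofReal t < T → 0 ≤ (inner ℝ (v' t) ((v t)⁻) : ℝ))
    (hzero : Tendsto (fun t : ℝ => ‖(v t)⁻‖) (𝓝[>] (0:ℝ)) (𝓝 0)) :
    ∀ t : ℝ, 0 < t → ENNReal.ofReal t < T → (v t)⁻ = 0 :=
  stmt1_general μ T v v' hderiv hpos hzero
end

section
/- Let s, q, f : ℝ → ℝ satisfy: s is continuous on [0,∞) and continuously differentiable on (0,∞) with s(r) > 0 for all r > 0; q is continuous on [0,∞) with q ≥ 0; f is continuous on [0,∞), twice continuously differentiable on (0,∞), and f ≥ 0; f''(r) + (s'(r)/s(r))·f'(r) = q(r)·f(r) for all r > 0; and s(r)·f'(r) → 0 as r → 0⁺. Then for all 0 < r' ≤ r, f(r) = f(r') + ∫_{r'}^{r} (1/s(η)) · ( ∫₀^{η} s(ξ)·q(ξ)·f(ξ) dξ ) dη. In particular, f'(r) ≥ 0 for all r > 0, so f is monotone increasing on [0,∞). -/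
/-!
Multiplying the ODE by `s` turns it into `(s f')' = s q f`. Since the flux `s f'` vanishes at
`0⁺`, integrating from `0` gives `s(η) f'(η) = ∫₀^η s q f ≥ 0`. Dividing by `s(η) > 0` and
integrating once more yields the representation of `f`, and `f' ≥ 0` gives monotonicity.
-/

open MeasureTheory Filter Topology intervalIntegral Set

theorem hasDerivAt_mul_deriv_of_radial_ode {s s' q f f' f'' : ℝ → ℝ} {x : ℝ} (hsx : s x ≠ 0)
    (hs : HasDerivAt s (s' x) x) (hf' : HasDerivAt f' (f'' x) x)
    (hode : f'' x + (s' x / s x) * f' x = q x * f x) :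
    HasDerivAt (fun y => s y * f' y) (s x * q x * f x) x := by
  refine (hs.mul hf').congr_deriv ?_
  field_simp at hode
  linear_combination hode

theorem mul_deriv_eq_integral_of_radial_ode {s s' q f f' f'' : ℝ → ℝ}
    (hs_cont : ContinuousOn s (Ici 0)) (hs_pos : ∀ r > (0:ℝ), 0 < s r)
    (hs_deriv : ∀ r > (0:ℝ), HasDerivAt s (s' r) r)
    (hq_cont : ContinuousOn q (Ici 0)) (hf_cont : ContinuousOn f (Ici 0))
    (hf'_deriv : ∀ r > (0:ℝ), HasDerivAt f' (f'' r) r)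
    (hode : ∀ r > (0:ℝ), f'' r + (s' r / s r) * f' r = q r * f r)
    (hlim : Tendsto (fun r => s r * f' r) (𝓝[>] (0:ℝ)) (𝓝 0)) {η : ℝ} (hη : 0 < η) :
    s η * f' η = ∫ ξ in (0:ℝ)..η, s ξ * q ξ * f ξ := by
  have hderiv : ∀ x > (0:ℝ), HasDerivAt (fun y => s y * f' y) (s x * q x * f x) x :=
    fun x hx => hasDerivAt_mul_deriv_of_radial_ode (hs_pos x hx).ne' (hs_deriv x hx)
      (hf'_deriv x hx) (hode x hx)
  have hint : IntervalIntegrable (fun ξ => s ξ * q ξ * f ξ) volume 0 η := by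
    refine (((hs_cont.mul hq_cont).mul hf_cont).mono ?_).intervalIntegrable
    rw [uIcc_of_le hη.le]
    exact Icc_subset_Ici_self
  rw [integral_eq_sub_of_hasDerivAt_of_tendsto hη (fun x hx => hderiv x hx.1) hint hlim
    (hderiv η hη).continuousAt.continuousWithinAt.tendsto, sub_zero]

theorem stmt3_general (s s' q f f' f'' : ℝ → ℝ)
    (hs_cont : ContinuousOn s (Set.Ici 0))
    (hs_pos : ∀ r > (0:ℝ), 0 < s r)
    (hs_deriv : ∀ r > (0:ℝ), HasDerivAt s (s' r) r)
    (hq_cont : ContinuousOn q (Set.Ici 0))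
    (hq_nonneg : ∀ r ≥ (0:ℝ), 0 ≤ q r)
    (hf_cont : ContinuousOn f (Set.Ici 0))
    (hf_deriv : ∀ r > (0:ℝ), HasDerivAt f (f' r) r)
    (hf'_deriv : ∀ r > (0:ℝ), HasDerivAt f' (f'' r) r)
    (hf_nonneg : ∀ r ≥ (0:ℝ), 0 ≤ f r)
    (hode : ∀ r > (0:ℝ), f'' r + (s' r / s r) * f' r = q r * f r)
    (hlim : Tendsto (fun r => s r * f' r) (𝓝[>] (0:ℝ)) (𝓝 0)) :
    (∀ r' r : ℝ, 0 < r' → r' ≤ r →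
      f r = f r' + ∫ η in r'..r, (s η)⁻¹ * ∫ ξ in (0:ℝ)..η, s ξ * q ξ * f ξ) ∧
    (∀ r > (0:ℝ), 0 ≤ f' r) ∧ MonotoneOn f (Set.Ici 0) := by
  have hf'_eq : ∀ η > (0:ℝ), f' η = (s η)⁻¹ * ∫ ξ in (0:ℝ)..η, s ξ * q ξ * f ξ := fun η hη =>
    eq_inv_mul_iff_mul_eq₀ (hs_pos η hη).ne' |>.mpr <|
      mul_deriv_eq_integral_of_radial_ode hs_cont hs_pos hs_deriv hq_cont hf_cont hf'_deriv
        hode hlim hη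
  have hf'_nonneg : ∀ r > (0:ℝ), 0 ≤ f' r := by
    intro r hr
    rw [hf'_eq r hr, integral_of_le hr.le]
    refine mul_nonneg (inv_nonneg.2 (hs_pos r hr).le) (setIntegral_nonneg measurableSet_Ioc ?_)
    exact fun ξ hξ => mul_nonneg (mul_nonneg (hs_pos ξ hξ.1).le (hq_nonneg ξ hξ.1.le))
      (hf_nonneg ξ hξ.1.le)
  refine ⟨fun r' r hr' hr => ?_, hf'_nonneg, ?_⟩
  · have hpos : uIcc r' r ⊆ Ioi 0 := by
      rw [uIcc_of_le hr]
      exact fun x hx => hr'.trans_le hx.1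
    have hf'_cont : ContinuousOn f' (uIcc r' r) := fun x hx =>
      (hf'_deriv x (hpos hx)).continuousAt.continuousWithinAt
    rw [← integral_congr fun x hx => hf'_eq x (hpos hx),
      integral_eq_sub_of_hasDerivAt (fun x hx => hf_deriv x (hpos hx))
        hf'_cont.intervalIntegrable]
    ring
  · refine monotoneOn_of_deriv_nonneg (convex_Ici 0) hf_cont ?_ ?_ <;> rw [interior_Ici]
    · exact fun x hx => (hf_deriv x hx).differentiableAt.differentiableWithinAt
    · exact fun x hx => (hf_deriv x hx).deriv ▸ hf'_nonneg x hx

/-- For the radial ODE `f'' + (s'/s) f' = q f` on `(0,∞)` with the same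
hypotheses as in Statement 2, one has the integral representation
`f(r) = f(r') + ∫_{r'}^r s(η)⁻¹ (∫₀^η s(ξ) q(ξ) f(ξ) dξ) dη` for all `0 < r' ≤ r`;
in particular `f' ≥ 0` on `(0,∞)`, so `f` is monotone increasing on `[0,∞)`. -/
theorem stmt3 (s s' q f f' f'' : ℝ → ℝ)
    (hs_cont : ContinuousOn s (Set.Ici 0))
    (hs_pos : ∀ r > (0:ℝ), 0 < s r)
    (hs_deriv : ∀ r > (0:ℝ), HasDerivAt s (s' r) r)
    (hs'_cont : ContinuousOn s' (Set.Ioi 0))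
    (hq_cont : ContinuousOn q (Set.Ici 0))
    (hq_nonneg : ∀ r ≥ (0:ℝ), 0 ≤ q r)
    (hf_cont : ContinuousOn f (Set.Ici 0))
    (hf_deriv : ∀ r > (0:ℝ), HasDerivAt f (f' r) r)
    (hf'_deriv : ∀ r > (0:ℝ), HasDerivAt f' (f'' r) r)
    (hf''_cont : ContinuousOn f'' (Set.Ioi 0))
    (hf_nonneg : ∀ r ≥ (0:ℝ), 0 ≤ f r)
    (hode : ∀ r > (0:ℝ), f'' r + (s' r / s r) * f' r = q r * f r)
    (hlim : Tendsto (fun r => s r * f' r) (𝓝[>] (0:ℝ)) (𝓝 0)) :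
    (∀ r' r : ℝ, 0 < r' → r' ≤ r →
      f r = f r' + ∫ η in r'..r, (s η)⁻¹ * ∫ ξ in (0:ℝ)..η, s ξ * q ξ * f ξ) ∧
    (∀ r > (0:ℝ), 0 ≤ f' r) ∧ MonotoneOn f (Set.Ici 0) :=
  stmt3_general s s' q f f' f'' hs_cont hs_pos hs_deriv hq_cont hq_nonneg hf_cont hf_deriv hf'_deriv
    hf_nonneg hode hlim
end

section
/- Let s, q, f : ℝ → ℝ satisfy: s is continuous on [0,∞) and continuously differentiable on (0,∞) with s(r) > 0 for all r > 0; q is continuous on [0,∞) with q ≥ 0; f is continuous on [0,∞), twice continuously differentiable on (0,∞), and f ≥ 0; f''(r) + (s'(r)/s(r))·f'(r) = q(r)·f(r) for all r > 0; and s(r)·f'(r) → 0 as r → 0⁺. Then for all 0 < r' < r, f(r) ≥ f(0)·( 1 + ∫_{r'}^{r} ( ∫₀^{η} s(ξ)·q(ξ) dξ ) / s(η) dη ). Consequently, if f is bounded on [0,∞) and for some r' > 0 the improper integral ∫_{r'}^{∞} ( ∫₀^{η} s(ξ)·q(ξ) dξ ) / s(η) dη diverges to ∞, then f(0) = 0.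 -/
/-!
The flux `g = s f'` satisfies `g' = s q f ≥ 0` and `g(0⁺) = 0`, so `g ≥ 0`; hence `f' ≥ 0`
and `f ≥ f(0)`. With `v(η) = ∫₀^η s q`, the function `g - f(0) v` has derivative
`s q (f - f(0)) ≥ 0` and also vanishes at `0⁺`, which gives `f' ≥ f(0) v / s`; integrating
from `r'` to `r` yields the lower bound. If the right-hand side diverges while `f` stays
bounded, `f(0)` must vanish.
-/

open MeasureTheory Filter Topology intervalIntegral Set

theorem hasDerivAt_flux_of_radial_ode {s s' q f f' f'' : ℝ → ℝ} {r : ℝ} (hs : s r ≠ 0)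
    (hs' : HasDerivAt s (s' r) r) (hf' : HasDerivAt f' (f'' r) r)
    (hode : f'' r + s' r / s r * f' r = q r * f r) :
    HasDerivAt (fun x => s x * f' x) (s r * q r * f r) r := by
  have key : s' r * f' r + s r * f'' r = s r * q r * f r := by
    field_simp at hode
    linear_combination hode
  exact key ▸ hs'.mul hf'

theorem le_of_tendsto_nhdsGT_of_hasDerivAt_nonneg {h h' : ℝ → ℝ} {a L x : ℝ}
    (hderiv : ∀ y > a, HasDerivAt h (h' y) y) (hnonneg : ∀ y > a, 0 ≤ h' y)
    (hlim : Tendsto h (𝓝[>] a) (𝓝 L)) (hx : a < x) : L ≤ h x := by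
  have hmono : MonotoneOn h (Ioi a) :=
    monotoneOn_of_hasDerivWithinAt_nonneg (convex_Ioi a)
      (fun y hy => (hderiv y hy).continuousAt.continuousWithinAt)
      (fun y hy => (hderiv y (interior_subset hy)).hasDerivWithinAt)
      (fun y hy => hnonneg y (interior_subset hy))
  refine le_of_tendsto hlim ?_
  filter_upwards [Ioo_mem_nhdsGT hx] with y hy
  exact hmono hy.1 hx hy.2.le

theorem monotoneOn_Ici_of_mul_deriv_nonneg {s f f' : ℝ → ℝ} {a : ℝ}
    (hs : ∀ r > a, 0 < s r) (hf : ContinuousOn f (Ici a))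
    (hderiv : ∀ r > a, HasDerivAt f (f' r) r) (hsf' : ∀ r > a, 0 ≤ s r * f' r) :
    MonotoneOn f (Ici a) := by
  refine monotoneOn_of_hasDerivWithinAt_nonneg (f' := f') (convex_Ici a) hf ?_ ?_ <;>
    rw [interior_Ici]
  · exact fun x hx => (hderiv x hx).hasDerivWithinAt
  · exact fun x hx => nonneg_of_mul_nonneg_right (hsf' x hx) (hs x hx)

theorem hasDerivAt_integral_of_continuousOn_Ici {w : ℝ → ℝ} {a η : ℝ}
    (hw : ContinuousOn w (Ici a)) (hη : a < η) :
    HasDerivAt (fun x => ∫ ξ in a..x, w ξ) (w η) η :=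
  integral_hasDerivAt_right
    ((hw.mono (uIcc_of_le hη.le ▸ Icc_subset_Ici_self)).intervalIntegrable)
    ((hw.mono Ioi_subset_Ici_self).stronglyMeasurableAtFilter isOpen_Ioi η hη)
    (hw.continuousAt (Ici_mem_nhds hη))

theorem tendsto_integral_nhdsGT {w : ℝ → ℝ} {a b : ℝ} (hab : a < b)
    (hw : IntervalIntegrable w volume a b) :
    Tendsto (fun x => ∫ ξ in a..x, w ξ) (𝓝[>] a) (𝓝 0) := by
  have hcont := continuousOn_primitive_interval' hw left_mem_uIcc a left_mem_uIcc
  rw [uIcc_of_le hab.le] at hcont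
  simpa using (hcont.mono_of_mem_nhdsWithin (Icc_mem_nhdsGT hab)).tendsto

theorem mul_integral_le_of_hasDerivAt {g w f : ℝ → ℝ} {a c η : ℝ}
    (hg : ∀ r > a, HasDerivAt g (w r * f r) r) (hlim : Tendsto g (𝓝[>] a) (𝓝 0))
    (hw : ContinuousOn w (Ici a)) (hw_nonneg : ∀ r > a, 0 ≤ w r) (hcf : ∀ r > a, c ≤ f r)
    (hη : a < η) : c * ∫ ξ in a..η, w ξ ≤ g η := by
  have hderiv : ∀ r > a, HasDerivAt (fun x => g x - c * ∫ ξ in a..x, w ξ)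
      (w r * (f r - c)) r := fun r hr =>
    ((hg r hr).sub ((hasDerivAt_integral_of_continuousOn_Ici hw hr).const_mul c)).congr_deriv
      (by ring)
  have hlim' : Tendsto (fun x => g x - c * ∫ ξ in a..x, w ξ) (𝓝[>] a) (𝓝 0) := by
    have hw₁ : IntervalIntegrable w volume a (a + 1) :=
      (hw.mono (uIcc_of_le (lt_add_one a).le ▸ Icc_subset_Ici_self)).intervalIntegrable
    simpa using hlim.sub ((tendsto_integral_nhdsGT (lt_add_one a) hw₁).const_mul c)
  have := le_of_tendsto_nhdsGT_of_hasDerivAt_nonneg hderiv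
    (fun r hr => mul_nonneg (hw_nonneg r hr) (sub_nonneg.2 (hcf r hr))) hlim' hη
  linarith

theorem mul_one_add_integral_le {f f' φ : ℝ → ℝ} {a b c : ℝ} (hab : a ≤ b)
    (hderiv : ∀ x ∈ Icc a b, HasDerivAt f (f' x) x) (hφ : ContinuousOn φ (Icc a b))
    (hφf' : ∀ x ∈ Icc a b, c * φ x ≤ f' x) (hc : c ≤ f a) :
    c * (1 + ∫ x in a..b, φ x) ≤ f b := by
  have hint : ∫ x in a..b, c * φ x ≤ f b - f a :=
    integral_le_sub_of_hasDeriv_right_of_le hab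
      (fun x hx => (hderiv x hx).continuousAt.continuousWithinAt)
      (fun x hx => (hderiv x (Ioo_subset_Icc_self hx)).hasDerivWithinAt)
      (hφ.const_smul c).integrableOn_Icc (fun x hx => hφf' x (Ioo_subset_Icc_self hx))
  rw [intervalIntegral.integral_const_mul] at hint
  linarith

theorem eq_zero_of_mul_le_of_tendsto_atTop {u v : ℝ → ℝ} {c C : ℝ} (hc : 0 ≤ c)
    (hu : Tendsto u atTop atTop) (hle : ∀ᶠ R in atTop, c * u R ≤ v R)
    (hv : ∀ᶠ R in atTop, v R ≤ C) : c = 0 := by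
  by_contra hne
  have hcu := (hu.const_mul_atTop (lt_of_le_of_ne hc (Ne.symm hne))).eventually_gt_atTop C
  obtain ⟨R, hR₁, hR₂, hR₃⟩ := (hcu.and (hle.and hv)).exists
  linarith

theorem stmt4_general (s s' q f f' f'' : ℝ → ℝ)
    (hs_cont : ContinuousOn s (Set.Ici 0))
    (hs_pos : ∀ r > (0:ℝ), 0 < s r)
    (hs_deriv : ∀ r > (0:ℝ), HasDerivAt s (s' r) r)
    (hq_cont : ContinuousOn q (Set.Ici 0))
    (hq_nonneg : ∀ r ≥ (0:ℝ), 0 ≤ q r)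
    (hf_cont : ContinuousOn f (Set.Ici 0))
    (hf_deriv : ∀ r > (0:ℝ), HasDerivAt f (f' r) r)
    (hf'_deriv : ∀ r > (0:ℝ), HasDerivAt f' (f'' r) r)
    (hf_nonneg : ∀ r ≥ (0:ℝ), 0 ≤ f r)
    (hode : ∀ r > (0:ℝ), f'' r + (s' r / s r) * f' r = q r * f r)
    (hlim : Tendsto (fun r => s r * f' r) (𝓝[>] (0:ℝ)) (𝓝 0)) :
    (∀ r' r : ℝ, 0 < r' → r' < r →
      f 0 * (1 + ∫ η in r'..r, (∫ ξ in (0:ℝ)..η, s ξ * q ξ) / s η) ≤ f r) ∧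
    ((∃ C : ℝ, ∀ r ≥ (0:ℝ), f r ≤ C) →
      (∃ r' > (0:ℝ), Tendsto
        (fun R => ∫ η in r'..R, (∫ ξ in (0:ℝ)..η, s ξ * q ξ) / s η) atTop atTop) →
      f 0 = 0) := by
  have hflux (r : ℝ) (hr : 0 < r) : HasDerivAt (fun x => s x * f' x) (s r * q r * f r) r :=
    hasDerivAt_flux_of_radial_ode (hs_pos r hr).ne' (hs_deriv r hr) (hf'_deriv r hr) (hode r hr)
  have hw : ContinuousOn (fun ξ => s ξ * q ξ) (Ici 0) := hs_cont.mul hq_cont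
  have hw_nonneg (r : ℝ) (hr : 0 < r) : 0 ≤ s r * q r :=
    mul_nonneg (hs_pos r hr).le (hq_nonneg r hr.le)
  have hf_mono : MonotoneOn f (Ici 0) :=
    monotoneOn_Ici_of_mul_deriv_nonneg hs_pos hf_cont hf_deriv fun r hr =>
      le_of_tendsto_nhdsGT_of_hasDerivAt_nonneg (h := fun x => s x * f' x) hflux
        (fun x hx => mul_nonneg (hw_nonneg x hx) (hf_nonneg x hx.le)) hlim hr
  have hf'_ge (η : ℝ) (hη : 0 < η) :
      f 0 * ((∫ ξ in (0:ℝ)..η, s ξ * q ξ) / s η) ≤ f' η := by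
    rw [← mul_div_assoc, div_le_iff₀ (hs_pos η hη), mul_comm (f' η)]
    exact mul_integral_le_of_hasDerivAt hflux hlim hw hw_nonneg
      (fun r hr => hf_mono self_mem_Ici hr.le hr.le) hη
  have hlower (r' r : ℝ) (hr' : 0 < r') (hr : r' < r) :
      f 0 * (1 + ∫ η in r'..r, (∫ ξ in (0:ℝ)..η, s ξ * q ξ) / s η) ≤ f r := by
    have hpos : Icc r' r ⊆ Ioi 0 := fun x hx => hr'.trans_le hx.1
    have hv : ContinuousOn (fun η => ∫ ξ in (0:ℝ)..η, s ξ * q ξ) (Icc r' r) := fun x hx =>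
      (hasDerivAt_integral_of_continuousOn_Ici hw (hpos hx)).continuousAt.continuousWithinAt
    have hs : ContinuousOn s (Icc r' r) := hs_cont.mono (hpos.trans Ioi_subset_Ici_self)
    exact mul_one_add_integral_le hr.le (fun x hx => hf_deriv x (hpos hx))
      (hv.div hs fun x hx => (hs_pos x (hpos hx)).ne') (fun x hx => hf'_ge x (hpos hx))
      (hf_mono self_mem_Ici hr'.le hr'.le)
  refine ⟨hlower, fun ⟨C, hC⟩ ⟨r', hr', hdiv⟩ => ?_⟩
  exact eq_zero_of_mul_le_of_tendsto_atTop (hf_nonneg 0 le_rfl)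
    (tendsto_atTop_add_const_left atTop 1 hdiv)
    ((eventually_gt_atTop r').mono fun R hR => hlower r' R hr' hR)
    ((eventually_ge_atTop 0).mono hC)

/-- For the radial ODE `f'' + (s'/s) f' = q f` on `(0,∞)` with the same
hypotheses as in Statement 2, one has
`f(r) ≥ f(0) (1 + ∫_{r'}^r (∫₀^η s(ξ) q(ξ) dξ) / s(η) dη)` for all `0 < r' < r`.
Consequently, if `f` is bounded on `[0,∞)` and for some `r' > 0` the improper integral
`∫_{r'}^∞ (∫₀^η s q) / s(η) dη` diverges to `∞`, then `f(0) = 0`. -/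
theorem stmt4 (s s' q f f' f'' : ℝ → ℝ)
    (hs_cont : ContinuousOn s (Set.Ici 0))
    (hs_pos : ∀ r > (0:ℝ), 0 < s r)
    (hs_deriv : ∀ r > (0:ℝ), HasDerivAt s (s' r) r)
    (hs'_cont : ContinuousOn s' (Set.Ioi 0))
    (hq_cont : ContinuousOn q (Set.Ici 0))
    (hq_nonneg : ∀ r ≥ (0:ℝ), 0 ≤ q r)
    (hf_cont : ContinuousOn f (Set.Ici 0))
    (hf_deriv : ∀ r > (0:ℝ), HasDerivAt f (f' r) r)
    (hf'_deriv : ∀ r > (0:ℝ), HasDerivAt f' (f'' r) r)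
    (hf''_cont : ContinuousOn f'' (Set.Ioi 0))
    (hf_nonneg : ∀ r ≥ (0:ℝ), 0 ≤ f r)
    (hode : ∀ r > (0:ℝ), f'' r + (s' r / s r) * f' r = q r * f r)
    (hlim : Tendsto (fun r => s r * f' r) (𝓝[>] (0:ℝ)) (𝓝 0)) :
    (∀ r' r : ℝ, 0 < r' → r' < r →
      f 0 * (1 + ∫ η in r'..r, (∫ ξ in (0:ℝ)..η, s ξ * q ξ) / s η) ≤ f r) ∧
    ((∃ C : ℝ, ∀ r ≥ (0:ℝ), f r ≤ C) →
      (∃ r' > (0:ℝ), Tendsto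
        (fun R => ∫ η in r'..R, (∫ ξ in (0:ℝ)..η, s ξ * q ξ) / s η) atTop atTop) →
      f 0 = 0) :=
  stmt4_general s s' q f f' f'' hs_cont hs_pos hs_deriv hq_cont hq_nonneg hf_cont hf_deriv hf'_deriv
    hf_nonneg hode hlim
end

section
/- For every continuous function s : (0,∞) → (0,∞) there exists an infinitely differentiable function f : ℝ → ℝ with f ≥ 0 and f = 0 on (−∞, 1] such that ∫_{1}^{∞} ( ∫₀^{r} s(ξ)·f(ξ) dξ ) / s(r) dr = ∞. -/
open MeasureTheory Filter Topology
open scoped ENNReal Manifold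

/-!
Let `R(t)` be the supremum of `s r / s ξ` over `r, ξ ∈ [1, t]`; it is finite by compactness and
nondecreasing in `t`, so some smooth `g` dominates `ξ ↦ R(ξ + 1)`. Take `f = g` beyond `2`, cut off
smoothly below. For `r ≥ 3` and `ξ ∈ (r - 1, r]` we get `s ξ f ξ ≥ s ξ · s r / s ξ = s r`, so the
inner integral is at least `s r`: the integrand of the outer integral is `≥ 1` on `(3, ∞)`.
-/

open Set

-- `0` when `t < a`, as the supremum of the empty set.
noncomputable def ratioBound (s : ℝ → ℝ) (a t : ℝ) : ℝ :=
  sSup ((fun p : ℝ × ℝ => s p.1 / s p.2) '' Icc a t ×ˢ Icc a t)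

section ratioBound

variable {s : ℝ → ℝ} {a : ℝ}

lemma bddAbove_ratioBound_set (hs : ContinuousOn s (Ici a)) (hpos : ∀ x ∈ Ici a, 0 < s x)
    (t : ℝ) : BddAbove ((fun p : ℝ × ℝ => s p.1 / s p.2) '' Icc a t ×ˢ Icc a t) := by
  have hIcc : Icc a t ⊆ Ici a := Icc_subset_Ici_self
  refine (isCompact_Icc.prod isCompact_Icc).bddAbove_image ?_
  refine ((hs.mono hIcc).comp continuousOn_fst fun p hp => hp.1).div
    ((hs.mono hIcc).comp continuousOn_snd fun p hp => hp.2) fun p hp => ?_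
  exact (hpos _ (hIcc hp.2)).ne'

lemma ratioBound_nonneg (hpos : ∀ x ∈ Ici a, 0 < s x) (t : ℝ) : 0 ≤ ratioBound s a t := by
  refine Real.sSup_nonneg ?_
  rintro _ ⟨p, hp, rfl⟩
  exact div_nonneg (hpos _ hp.1.1).le (hpos _ hp.2.1).le

lemma monotone_ratioBound (hs : ContinuousOn s (Ici a)) (hpos : ∀ x ∈ Ici a, 0 < s x) :
    Monotone (ratioBound s a) := by
  intro t t' htt'
  refine Real.sSup_le (fun x hx => le_csSup (bddAbove_ratioBound_set hs hpos t') ?_)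
    (ratioBound_nonneg hpos t')
  have hsub : Icc a t ⊆ Icc a t' := Icc_subset_Icc_right htt'
  exact image_mono (prod_mono hsub hsub) hx

lemma le_mul_ratioBound (hs : ContinuousOn s (Ici a)) (hpos : ∀ x ∈ Ici a, 0 < s x)
    {t r ξ : ℝ} (hr : r ∈ Icc a t) (hξ : ξ ∈ Icc a t) : s r ≤ s ξ * ratioBound s a t := by
  have hsξ : 0 < s ξ := hpos ξ hξ.1
  have hratio : s r / s ξ ≤ ratioBound s a t :=
    le_csSup (bddAbove_ratioBound_set hs hpos t) ⟨(r, ξ), ⟨hr, hξ⟩, rfl⟩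
  calc s r = s ξ * (s r / s ξ) := by field_simp
    _ ≤ s ξ * ratioBound s a t := mul_le_mul_of_nonneg_left hratio hsξ.le

end ratioBound

theorem exists_contDiff_gt_of_monotone {h : ℝ → ℝ} (hh : Monotone h) :
    ∃ g : ℝ → ℝ, ContDiff ℝ (⊤ : ℕ∞) g ∧ ∀ x, h x < g x := by
  have hloc : ∀ x : ℝ, ∃ c : ℝ, ∀ᶠ y in 𝓝 x, c ∈ Ioi (h y) := fun x =>
    ⟨h (x + 1) + 1, mem_of_superset (Iio_mem_nhds (lt_add_one x)) fun y hy =>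
      (hh (le_of_lt hy)).trans_lt (lt_add_one _)⟩
  obtain ⟨g, hg⟩ := exists_contMDiffMap_forall_mem_convex_of_local_const 𝓘(ℝ, ℝ)
    (n := (⊤ : ℕ∞)) (fun x => convex_Ioi (h x)) hloc
  exact ⟨g, contMDiff_iff_contDiff.1 g.contMDiff, hg⟩

lemma setLIntegral_Ioi_eq_top_of_one_le {F : ℝ → ℝ≥0∞} {a b : ℝ} (hba : b ≤ a)
    (hF : ∀ r, a < r → 1 ≤ F r) : ∫⁻ r in Ioi b, F r = ⊤ := by
  refine eq_top_iff.2 ?_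
  calc (⊤ : ℝ≥0∞) = ∫⁻ _ in Ioi a, 1 := by rw [setLIntegral_one, Real.volume_Ioi]
    _ ≤ ∫⁻ r in Ioi a, F r := setLIntegral_mono' measurableSet_Ioi fun r hr => hF r hr
    _ ≤ ∫⁻ r in Ioi b, F r := lintegral_mono_set (Ioi_subset_Ioi hba)

lemma ofReal_le_setLIntegral_Ioc {u : ℝ → ℝ} {a c r : ℝ} (har : a ≤ r - 1)
    (hu : ∀ ξ ∈ Ioc (r - 1) r, c ≤ u ξ) :
    ENNReal.ofReal c ≤ ∫⁻ ξ in Ioc a r, ENNReal.ofReal (u ξ) :=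
  calc ENNReal.ofReal c = ∫⁻ _ in Ioc (r - 1) r, ENNReal.ofReal c := by
        rw [setLIntegral_const, Real.volume_Ioc, sub_sub_cancel, ENNReal.ofReal_one, mul_one]
    _ ≤ ∫⁻ ξ in Ioc (r - 1) r, ENNReal.ofReal (u ξ) :=
        setLIntegral_mono' measurableSet_Ioc fun ξ hξ => ENNReal.ofReal_le_ofReal (hu ξ hξ)
    _ ≤ ∫⁻ ξ in Ioc a r, ENNReal.ofReal (u ξ) := lintegral_mono_set (Ioc_subset_Ioc_left har)

/-- For every continuous `s : (0,∞) → (0,∞)` there is a smooth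
nonnegative `f : ℝ → ℝ` vanishing on `(-∞,1]` such that
`∫_1^∞ (∫₀^r s(ξ) f(ξ) dξ) / s(r) dr = ∞`. -/
theorem stmt6 (s : ℝ → ℝ)
    (hs_cont : ContinuousOn s (Set.Ioi 0))
    (hs_pos : ∀ r > (0:ℝ), 0 < s r) :
    ∃ f : ℝ → ℝ, ContDiff ℝ (⊤ : ℕ∞) f ∧ (∀ x, 0 ≤ f x) ∧ (∀ x ≤ (1:ℝ), f x = 0) ∧
      (∫⁻ r in Set.Ioi (1:ℝ),
        (∫⁻ ξ in Set.Ioc (0:ℝ) r, ENNReal.ofReal (s ξ * f ξ)) / ENNReal.ofReal (s r)) = ⊤ := by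
  have hIci : Ici (1 : ℝ) ⊆ Ioi 0 := Ici_subset_Ioi.2 one_pos
  have hs : ContinuousOn s (Ici 1) := hs_cont.mono hIci
  have hpos : ∀ x ∈ Ici (1 : ℝ), 0 < s x := fun x hx => hs_pos x (hIci hx)
  obtain ⟨g, hg, hgt⟩ := exists_contDiff_gt_of_monotone
    ((monotone_ratioBound hs hpos).comp (monotone_id.add_const (1 : ℝ)))
  have hg_nonneg : ∀ x, 0 ≤ g x := fun x => (ratioBound_nonneg hpos _).trans (hgt x).le
  refine ⟨fun x => Real.smoothTransition (x - 1) * g x,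
    (Real.smoothTransition.contDiff.comp (contDiff_id.sub contDiff_const)).mul hg,
    fun x => mul_nonneg (Real.smoothTransition.nonneg _) (hg_nonneg x),
    fun x hx => by simp [Real.smoothTransition.zero_of_nonpos (sub_nonpos.2 hx)], ?_⟩
  refine setLIntegral_Ioi_eq_top_of_one_le (a := 3) (by norm_num) fun r hr => ?_
  have hsr : 0 < s r := hs_pos r (by linarith)
  rw [ENNReal.le_div_iff_mul_le (Or.inl (ENNReal.ofReal_pos.2 hsr).ne')
    (Or.inl ENNReal.ofReal_ne_top), one_mul]
  refine ofReal_le_setLIntegral_Ioc (by linarith) fun ξ hξ => ?_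
  dsimp only
  rw [Real.smoothTransition.one_of_one_le (by linarith [hξ.1]), one_mul]
  calc s r ≤ s ξ * ratioBound s 1 (ξ + 1) :=
        le_mul_ratioBound hs hpos ⟨by linarith, by linarith [hξ.1]⟩
          ⟨by linarith [hξ.1], by linarith⟩
    _ ≤ s ξ * g ξ := mul_le_mul_of_nonneg_left (hgt ξ).le (hs_pos ξ (by linarith [hξ.1])).le
end

section
/- Let r₀ > 0 and let A, B : [0,∞) → (0,∞) be continuous functions. Then there exists an infinitely differentiable convex function f : ℝ → [0,∞) such that f = 0 on (−∞, r₀], f is strictly increasing on [r₀,∞), and ∫_{r₀}^{∞} f(t)·f'(t) / max( log( A(t) + f'(t)²·B(t) ), 1 ) dt = ∞. -/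
/-!
The derivative `p = f'` is taken smooth, monotone, zero up to `r₀`, positive after it, and
above both `1` and `log (A + B)` from `r₀ + 1` on: a monotone majorant of `log (A + B)`, smoothed
by convolution with a bump and switched on by a smooth transition. Then
`log (A + p² B) ≤ log (A + B) + 2 log (1 + p) ≤ 3 p`, so the integrand is at least `f / 3`,
which tends to infinity because `f` is the primitive of `p`.
-/

open MeasureTheory Filter Set ContinuousLinearMap
open scoped Convolution ContDiff

theorem ContinuousOn.exists_monotone_ge {L : ℝ → ℝ} {a : ℝ} (hL : ContinuousOn L (Ici a)) :
    ∃ M : ℝ → ℝ, Monotone M ∧ ∀ x, a ≤ x → L x ≤ M x := by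
  have hbdd : ∀ x, BddAbove (L '' Icc a (max x a)) := fun x =>
    (isCompact_Icc.image_of_continuousOn (hL.mono Icc_subset_Ici_self)).bddAbove
  refine ⟨fun x => sSup (L '' Icc a (max x a)), fun x y hxy => ?_, fun x hx => ?_⟩
  · exact csSup_le_csSup (hbdd y) ((nonempty_Icc.2 (le_max_right x a)).image L)
      (image_mono (Icc_subset_Icc le_rfl (max_le_max hxy le_rfl)))
  · exact le_csSup (hbdd x) ⟨x, ⟨hx, le_max_left x a⟩, rfl⟩

theorem Monotone.exists_contDiff_monotone_ge {N : ℝ → ℝ} (hN : Monotone N) :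
    ∃ p : ℝ → ℝ, ContDiff ℝ ∞ p ∧ Monotone p ∧ N ≤ p := by
  let φ : ContDiffBump (0 : ℝ) := ⟨1 / 2, 1, by norm_num, by norm_num⟩
  set ψ := φ.normed volume
  have hψ_supp : ∀ t, ψ t ≠ 0 → |t| < 1 := fun t ht => by
    have := φ.support_normed_eq (μ := volume) ▸ Function.mem_support.2 ht
    simpa [φ] using this
  have hconv : ∀ x, ConvolutionExistsAt ψ N x (lsmul ℝ ℝ) volume :=
    φ.hasCompactSupport_normed.convolutionExists_left _ φ.continuous_normed hN.locallyIntegrable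
  -- shifted by the radius of the bump, the average of `N` near `x` only sees values `≥ N x`
  refine ⟨fun x => (ψ ⋆[lsmul ℝ ℝ] N) (x + 1), ?_, fun x y hxy => ?_, fun x => ?_⟩
  · exact (φ.hasCompactSupport_normed.contDiff_convolution_left (lsmul ℝ ℝ) φ.contDiff_normed
      hN.locallyIntegrable).comp (contDiff_id.add contDiff_const)
  · refine integral_mono (hconv _) (hconv _) fun t => ?_
    simp only [lsmul_apply, smul_eq_mul]
    exact mul_le_mul_of_nonneg_left (hN (by linarith)) (φ.nonneg_normed t)
  · calc N x = ∫ t, ψ t * N x := by rw [integral_mul_const, φ.integral_normed, one_mul]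
      _ ≤ (ψ ⋆[lsmul ℝ ℝ] N) (x + 1) := by
        refine integral_mono (φ.integrable_normed.mul_const _) (hconv _) fun t => ?_
        rcases eq_or_ne (ψ t) 0 with ht | ht
        · simp [ht]
        · have := (abs_lt.1 (hψ_supp t ht)).2
          exact mul_le_mul_of_nonneg_left (hN (by linarith)) (φ.nonneg_normed t)

section Primitive

variable {p : ℝ → ℝ}

theorem Continuous.differentiable_primitive (hp : Continuous p) (a : ℝ) :
    Differentiable ℝ fun x => ∫ t in a..x, p t :=
  fun x => (hp.integral_hasStrictDerivAt a x).hasDerivAt.differentiableAt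

theorem Continuous.deriv_primitive (hp : Continuous p) (a : ℝ) :
    deriv (fun x => ∫ t in a..x, p t) = p :=
  funext (hp.deriv_integral p a)

theorem ContDiff.primitive (hp : ContDiff ℝ ∞ p) (a : ℝ) :
    ContDiff ℝ ∞ fun x => ∫ t in a..x, p t :=
  contDiff_infty_iff_deriv.2
    ⟨hp.continuous.differentiable_primitive a, by rwa [hp.continuous.deriv_primitive]⟩

theorem Monotone.convexOn_primitive (hmono : Monotone p) (hp : Continuous p) (a : ℝ) :
    ConvexOn ℝ univ fun x => ∫ t in a..x, p t :=
  Monotone.convexOn_univ_of_deriv (hp.differentiable_primitive a) (by rwa [hp.deriv_primitive])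

theorem primitive_eq_zero_of_le {a : ℝ} (hp : ∀ x ≤ a, p x = 0) {x : ℝ} (hx : x ≤ a) :
    ∫ t in a..x, p t = 0 := by
  rw [intervalIntegral.integral_congr (g := 0) fun s hs => hp s (hs.2.trans (max_le le_rfl hx))]
  exact intervalIntegral.integral_zero

theorem Continuous.strictMonoOn_primitive {a : ℝ} (hp : Continuous p) (hpos : ∀ x, a < x → 0 < p x) :
    StrictMonoOn (fun x => ∫ t in a..x, p t) (Ici a) :=
  strictMonoOn_of_deriv_pos (convex_Ici a) (hp.differentiable_primitive a).continuous.continuousOn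
    fun x hx => by
      rw [interior_Ici] at hx
      rw [hp.deriv_primitive]
      exact hpos x hx

theorem Monotone.tendsto_primitive_atTop (hmono : Monotone p) (hp : Continuous p) {a b : ℝ}
    (hb : 0 < p b) : Tendsto (fun x => ∫ t in a..x, p t) atTop atTop := by
  set F := fun x => ∫ t in a..x, p t
  have hF := hp.differentiable_primitive a
  have hlin : ∀ x, b ≤ x → F b + p b * (x - b) ≤ F x := fun x hx => by
    have := (convex_Ici b).mul_sub_le_image_sub_of_le_deriv hF.continuous.continuousOn
      hF.differentiableOn (fun y hy => by
        rw [interior_Ici] at hy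
        rw [hp.deriv_primitive]
        exact hmono hy.le) b self_mem_Ici x hx hx
    linarith
  refine tendsto_atTop_mono' _ ((eventually_ge_atTop b).mono hlin) ?_
  exact tendsto_atTop_add_const_left _ _
    ((tendsto_atTop_add_const_right _ _ tendsto_id).const_mul_atTop hb)

end Primitive

theorem exists_contDiff_convexOn_deriv_eq {q : ℝ → ℝ} (hq : ContDiff ℝ ∞ q)
    (hq_mono : Monotone q) (hq_pos : ∀ x, 0 < q x) (r₀ : ℝ) :
    ∃ f : ℝ → ℝ, ContDiff ℝ ∞ f ∧ ConvexOn ℝ univ f ∧ (∀ x, 0 ≤ f x) ∧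
      (∀ x ≤ r₀, f x = 0) ∧ StrictMonoOn f (Ici r₀) ∧
      (∀ x, r₀ + 1 ≤ x → deriv f x = q x) ∧ Tendsto f atTop atTop := by
  let p x := Real.smoothTransition (x - r₀) * q x
  have hp_smooth : ContDiff ℝ ∞ p :=
    (Real.smoothTransition.contDiff.comp (contDiff_id.sub contDiff_const)).mul hq
  have hp_mono : Monotone p :=
    (Real.smoothTransition.monotone.comp fun x y h => sub_le_sub_right h r₀).mul hq_mono
      (fun _ => Real.smoothTransition.nonneg _) fun x => (hq_pos x).le
  have hp_zero : ∀ x ≤ r₀, p x = 0 := fun x hx => by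
    simp only [p, Real.smoothTransition.zero_of_nonpos (sub_nonpos.2 hx), zero_mul]
  have hp_pos : ∀ x, r₀ < x → 0 < p x := fun x hx =>
    mul_pos (Real.smoothTransition.pos_of_pos (sub_pos.2 hx)) (hq_pos x)
  have hp_eq : ∀ x, r₀ + 1 ≤ x → p x = q x := fun x hx => by
    simp only [p, Real.smoothTransition.one_of_one_le (le_sub_iff_add_le'.2 hx), one_mul]
  have hp := hp_smooth.continuous
  refine ⟨fun x => ∫ t in r₀..x, p t, hp_smooth.primitive r₀, hp_mono.convexOn_primitive hp r₀,
    fun x => ?_, fun x => primitive_eq_zero_of_le hp_zero, hp.strictMonoOn_primitive hp_pos,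
    fun x hx => by rw [hp.deriv_primitive, hp_eq x hx],
    hp_mono.tendsto_primitive_atTop hp (hp_pos (r₀ + 1) (lt_add_one r₀))⟩
  rcases le_total x r₀ with hx | hx
  · exact (primitive_eq_zero_of_le hp_zero hx).ge
  · exact intervalIntegral.integral_nonneg hx fun s _ =>
      mul_nonneg (Real.smoothTransition.nonneg _) (hq_pos s).le

theorem log_add_sq_mul_le {a b x : ℝ} (ha : 0 < a) (hb : 0 ≤ b) (hx : 0 ≤ x) :
    Real.log (a + x ^ 2 * b) ≤ Real.log (a + b) + 2 * x := by
  calc Real.log (a + x ^ 2 * b) ≤ Real.log ((a + b) * (1 + x) ^ 2) :=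
        Real.log_le_log (by positivity) (by nlinarith)
    _ = Real.log (a + b) + 2 * Real.log (1 + x) := by
        rw [Real.log_mul (by positivity) (by positivity), Real.log_pow, Nat.cast_ofNat]
    _ ≤ Real.log (a + b) + 2 * x := by
        have := Real.log_le_sub_one_of_pos (show 0 < 1 + x by linarith)
        linarith

theorem one_le_mul_div_max_log {a b x y : ℝ} (ha : 0 < a) (hb : 0 ≤ b) (hx : 1 ≤ x)
    (hlog : Real.log (a + b) ≤ x) (hy : 3 ≤ y) :
    1 ≤ y * x / max (Real.log (a + x ^ 2 * b)) 1 := by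
  have hmax : max (Real.log (a + x ^ 2 * b)) 1 ≤ 3 * x :=
    max_le (by linarith [log_add_sq_mul_le ha hb (by linarith : (0:ℝ) ≤ x)]) (by linarith)
  rw [one_le_div (one_pos.trans_le (le_max_right _ _))]
  nlinarith

theorem lintegral_Ioi_ofReal_eq_top {g : ℝ → ℝ} (a : ℝ) (hg : ∀ᶠ t in atTop, 1 ≤ g t) :
    ∫⁻ t in Ioi a, ENNReal.ofReal (g t) = ⊤ := by
  obtain ⟨b, hb⟩ := eventually_atTop.1 hg
  rw [← top_le_iff]
  calc ⊤ = ∫⁻ _ in Ioi (max a b), 1 := by rw [setLIntegral_one, Real.volume_Ioi]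
    _ ≤ ∫⁻ t in Ioi (max a b), ENNReal.ofReal (g t) :=
        setLIntegral_mono' measurableSet_Ioi fun t ht =>
          ENNReal.one_le_ofReal.2 (hb t (le_of_max_le_right (le_of_lt ht)))
    _ ≤ ∫⁻ t in Ioi a, ENNReal.ofReal (g t) :=
        lintegral_mono_set (Ioi_subset_Ioi (le_max_left a b))

theorem stmt7_general (r₀ : ℝ) (A B : ℝ → ℝ)
    (hA_cont : ContinuousOn A (Set.Ici 0)) (hA_pos : ∀ t ≥ (0:ℝ), 0 < A t)
    (hB_cont : ContinuousOn B (Set.Ici 0)) (hB_pos : ∀ t ≥ (0:ℝ), 0 < B t) :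
    ∃ f : ℝ → ℝ, ContDiff ℝ (⊤ : ℕ∞) f ∧ ConvexOn ℝ Set.univ f ∧ (∀ x, 0 ≤ f x) ∧
      (∀ x ≤ r₀, f x = 0) ∧ StrictMonoOn f (Set.Ici r₀) ∧
      (∫⁻ t in Set.Ioi r₀, ENNReal.ofReal
        (f t * deriv f t / max (Real.log (A t + (deriv f t) ^ 2 * B t)) 1)) = ⊤ := by
  have hL : ContinuousOn (fun t => Real.log (A t + B t)) (Ici 0) :=
    (hA_cont.add hB_cont).log fun t ht => (add_pos (hA_pos t ht) (hB_pos t ht)).ne'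
  obtain ⟨M, hM_mono, hLM⟩ := hL.exists_monotone_ge
  obtain ⟨q, hq_smooth, hq_mono, hMq⟩ :=
    (hM_mono.max (monotone_const (c := (1 : ℝ)))).exists_contDiff_monotone_ge
  have hq_one : ∀ t, 1 ≤ q t := fun t => (le_max_right _ _).trans (hMq t)
  obtain ⟨f, hf_smooth, hf_convex, hf_nonneg, hf_zero, hf_mono, hf_deriv, hf_top⟩ :=
    exists_contDiff_convexOn_deriv_eq hq_smooth hq_mono (fun t => one_pos.trans_le (hq_one t)) r₀
  refine ⟨f, hf_smooth, hf_convex, hf_nonneg, hf_zero, hf_mono, lintegral_Ioi_ofReal_eq_top r₀ ?_⟩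
  filter_upwards [eventually_ge_atTop 0, eventually_ge_atTop (r₀ + 1),
    hf_top.eventually_ge_atTop 3] with t ht₀ ht hft
  rw [hf_deriv t ht]
  exact one_le_mul_div_max_log (hA_pos t ht₀) (hB_pos t ht₀).le (hq_one t)
    ((hLM t ht₀).trans ((le_max_left _ _).trans (hMq t))) hft

/-- Given `r₀ > 0` and continuous `A, B : [0,∞) → (0,∞)`, there is a
smooth convex `f : ℝ → [0,∞)` vanishing on `(-∞,r₀]`, strictly increasing on `[r₀,∞)`,
with `∫_{r₀}^∞ f(t) f'(t) / max(log(A(t) + f'(t)² B(t)), 1) dt = ∞`. -/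
theorem stmt7 (r₀ : ℝ) (hr₀ : 0 < r₀) (A B : ℝ → ℝ)
    (hA_cont : ContinuousOn A (Set.Ici 0)) (hA_pos : ∀ t ≥ (0:ℝ), 0 < A t)
    (hB_cont : ContinuousOn B (Set.Ici 0)) (hB_pos : ∀ t ≥ (0:ℝ), 0 < B t) :
    ∃ f : ℝ → ℝ, ContDiff ℝ (⊤ : ℕ∞) f ∧ ConvexOn ℝ Set.univ f ∧ (∀ x, 0 ≤ f x) ∧
      (∀ x ≤ r₀, f x = 0) ∧ StrictMonoOn f (Set.Ici r₀) ∧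
      (∫⁻ t in Set.Ioi r₀, ENNReal.ofReal
        (f t * deriv f t / max (Real.log (A t + (deriv f t) ^ 2 * B t)) 1)) = ⊤ :=
  stmt7_general r₀ A B hA_cont hA_pos hB_cont hB_pos
end
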